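/- arXiv:1006.0753 — 3 statements merged into one kernel-verified Lean document; each statement's English description precedes it below -/
import Mathlib

section
/- Let X, Y, E be nonempty sets, ℋ a nonempty family of mappings from X to Y, G a (real or complex) Banach space, K a compact Hausdorff topological space, 0 < p < ∞, and let R : K × E × G → [0,∞) and S : ℋ × E × G → [0,∞) be maps. Suppose only that R satisfies property (2): for every x ∈ E and b ∈ G, the map φ ↦ R(φ, x, b) is continuous on K (no hypothesis is imposed on S). Then a map f ∈ ℋ is RS-abstract p-summing if and only if there exist a constant C > 0 and a Borel probability measure μ on K such that S(f, x, b) ≤ C (∫_K R(φ, x, b)^p dμ(φ))^{1/p} for all x ∈ E and b ∈ G. -/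
/-! Raising to the `p`-th power, both sides are statements about the continuous functions
`g_{x,b} = S(f,x,b)^p - C^p R(·,x,b)^p` on `K`: being summing says that every finite sum of them
(repetitions allowed) is `≤ 0` somewhere, domination says that some probability measure gives
each of them a nonpositive integral. Repetitions give natural weights, and rounding weights up
gives arbitrary nonnegative ones, so the convex cone generated by the `g_{x,b}` misses the open
cone of strictly positive functions. A Hahn–Banach functional separating the two is, after
normalisation, positive and equal to `1` at `1`, and the Riesz–Markov–Kakutani theorem turns it
into the measure. -/

open MeasureTheory Set
open scoped CompactlySupported

namespace Pietsch

theorem nonpos_of_forall_add_mul_le {a b u : ℝ} (h : ∀ t : ℝ, 0 ≤ t → a + t * b ≤ u) : b ≤ 0 := by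
  by_contra! hb
  have hau : a ≤ u := by simpa using h 0 le_rfl
  have := h ((u - a + 1) / b) (by positivity)
  rw [div_mul_cancel₀ _ hb.ne'] at this
  linarith

theorem rpow_one_div_le_mul_rpow_one_div_iff {s y C p : ℝ} (hs : 0 ≤ s) (hy : 0 ≤ y) (hC : 0 ≤ C)
    (hp : 0 < p) : s ^ (1 / p) ≤ C * y ^ (1 / p) ↔ s ≤ C ^ p * y := by
  have hCp : C * y ^ (1 / p) = (C ^ p * y) ^ (1 / p) := by
    rw [Real.mul_rpow (Real.rpow_nonneg hC p) hy, one_div, Real.rpow_rpow_inv hC hp.ne']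
  rw [hCp, Real.rpow_le_rpow_iff hs (mul_nonneg (Real.rpow_nonneg hC p) hy) (one_div_pos.mpr hp)]

variable {K ι : Type*} [TopologicalSpace K]

theorem exists_sum_nonpos_of_fintype {g : ι → C(K, ℝ)}
    (h : ∀ (m : ℕ) (i : Fin m → ι), ∃ φ, ∑ j, g (i j) φ ≤ 0)
    (κ : Type*) [Fintype κ] (i : κ → ι) : ∃ φ, ∑ k, g (i k) φ ≤ 0 := by
  obtain ⟨φ, hφ⟩ := h _ (i ∘ (Fintype.equivFin κ).symm)
  exact ⟨φ, by rwa [← (Fintype.equivFin κ).symm.sum_comp]⟩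

theorem exists_sum_natCast_mul_nonpos {g : ι → C(K, ℝ)}
    (h : ∀ (m : ℕ) (i : Fin m → ι), ∃ φ, ∑ j, g (i j) φ ≤ 0)
    (s : Finset ι) (ν : ι → ℕ) : ∃ φ, ∑ i ∈ s, (ν i : ℝ) * g i φ ≤ 0 := by
  obtain ⟨φ, hφ⟩ := exists_sum_nonpos_of_fintype h (Σ i : s, Fin (ν i)) fun k => k.1
  refine ⟨φ, ?_⟩
  simpa [Fintype.sum_sigma, ← Finset.sum_coe_sort s] using hφ

variable [CompactSpace K]

theorem exists_sum_mul_nonpos {g : ι → C(K, ℝ)}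
    (h : ∀ (m : ℕ) (i : Fin m → ι), ∃ φ, ∑ j, g (i j) φ ≤ 0)
    (s : Finset ι) {α : ι → ℝ} (hα : ∀ i, 0 ≤ α i) : ∃ φ, ∑ i ∈ s, α i * g i φ ≤ 0 := by
  have : Nonempty K := (h 0 Fin.elim0).nonempty
  set G : C(K, ℝ) := ∑ i ∈ s, α i • g i
  have hG : ∀ φ, G φ = ∑ i ∈ s, α i * g i φ := fun φ => by simp [G]
  obtain ⟨φ₀, -, hφ₀⟩ := isCompact_univ.exists_isMinOn univ_nonempty G.continuous.continuousOn
  refine ⟨φ₀, ?_⟩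
  set M := ∑ i ∈ s, ‖g i‖
  -- rounding the weights `N * α i` up to integers moves each term by at most `‖g i‖`
  have hround : ∀ N : ℕ, N * G φ₀ ≤ M := by
    intro N
    obtain ⟨φ, hφ⟩ := exists_sum_natCast_mul_nonpos h s fun i => ⌈N * α i⌉₊
    have hterm : ∀ i, N * α i * g i φ ≤ ⌈N * α i⌉₊ * g i φ + ‖g i‖ := by
      intro i
      have hceil := Nat.le_ceil ((N : ℝ) * α i)
      have hceil' := Nat.ceil_lt_add_one (mul_nonneg N.cast_nonneg (hα i))
      have hnorm := abs_le.mp ((Real.norm_eq_abs _).symm.trans_le ((g i).norm_coe_le_norm φ))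
      nlinarith
    calc N * G φ₀ ≤ N * G φ := mul_le_mul_of_nonneg_left (hφ₀ (mem_univ φ)) N.cast_nonneg
      _ = ∑ i ∈ s, N * α i * g i φ := by rw [hG, Finset.mul_sum]; simp only [mul_assoc]
      _ ≤ ∑ i ∈ s, (⌈N * α i⌉₊ * g i φ + ‖g i‖) := Finset.sum_le_sum fun i _ => hterm i
      _ ≤ M := by rw [Finset.sum_add_distrib]; linarith
  rw [← hG]
  refine le_of_forall_pos_lt_add fun ε hε => ?_
  obtain ⟨N, hN⟩ := exists_nat_gt (M / ε)
  have hNpos : (0 : ℝ) < N :=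
    (div_nonneg (Finset.sum_nonneg fun i _ => norm_nonneg _) hε.le).trans_lt hN
  rw [zero_add, ← mul_lt_mul_iff_of_pos_left hNpos]
  calc N * G φ₀ ≤ M := hround N
    _ < N * ε := by rwa [div_lt_iff₀ hε] at hN

theorem forall_mem_hull_exists_nonpos {g : ι → C(K, ℝ)}
    (h : ∀ (m : ℕ) (i : Fin m → ι), ∃ φ, ∑ j, g (i j) φ ≤ 0) :
    ∀ f ∈ PointedCone.hull ℝ (range g), ∃ φ, f φ ≤ 0 := by
  intro f hf
  obtain ⟨c, rfl⟩ := Finsupp.mem_span_range_iff_exists_finsupp.mp hf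
  obtain ⟨φ, hφ⟩ := exists_sum_mul_nonpos h c.support fun i => (c i).2
  exact ⟨φ, by simpa [Finsupp.sum, ← Nonneg.coe_smul] using hφ⟩

theorem exists_positiveLinearMap_of_forall_exists_nonpos (D : PointedCone ℝ C(K, ℝ))
    (hD : ∀ f ∈ D, ∃ φ, f φ ≤ 0) :
    ∃ Λ : C(K, ℝ) →ₚ[ℝ] ℝ, Λ 1 = 1 ∧ ∀ f ∈ D, Λ f ≤ 0 := by
  set P : Set C(K, ℝ) := {f | ∀ φ, 0 < f φ}
  have hPopen : IsOpen P := by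
    simpa [MapsTo, P] using ContinuousMap.isOpen_setOfPred_mapsTo (X := K) (Y := ℝ) isCompact_univ
      (isOpen_Ioi (a := 0))
  have hPconv : Convex ℝ P := fun f hf g hg a b ha hb hab φ => by
    simpa using convex_Ioi (0 : ℝ) (hf φ) (hg φ) ha hb hab
  have hPD : Disjoint P D := Set.disjoint_left.mpr fun f hfP hfD => by
    obtain ⟨φ, hφ⟩ := hD f hfD
    exact (hfP φ).not_ge hφ
  obtain ⟨L, u, hLP, hLD⟩ := geometric_hahn_banach_open hPconv hPopen D.convex hPD
  have hu : u ≤ 0 := by simpa using hLD 0 D.zero_mem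
  have hL1 : L 1 < 0 := (hLP 1 fun _ => one_pos).trans_le hu
  have hLnonneg : ∀ f ∈ D, 0 ≤ L f := fun f hf => by
    have := nonpos_of_forall_add_mul_le (a := 0) (b := -L f) (u := -u) fun t ht => by
      have := hLD _ (D.smul_mem ht hf)
      simp only [map_smul, smul_eq_mul] at this
      linarith
    linarith
  have hLpos : ∀ f : C(K, ℝ), 0 ≤ f → L f ≤ 0 := fun f hf =>
    nonpos_of_forall_add_mul_le (a := L 1) (u := u) fun t ht => by
      have := hLP (1 + t • f) fun φ => by
        simpa using add_pos_of_pos_of_nonneg one_pos (mul_nonneg ht (hf φ))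
      simpa using this.le
  have hc : 0 ≤ (-L 1)⁻¹ := inv_nonneg.mpr (neg_nonneg.mpr hL1.le)
  refine ⟨PositiveLinearMap.mk₀ ((-L 1)⁻¹ • -L.toLinearMap) fun f hf => ?_, ?_, fun f hf => ?_⟩
  · exact mul_nonneg hc (neg_nonneg.mpr (hLpos f hf))
  · exact inv_mul_cancel₀ (neg_ne_zero.mpr hL1.ne)
  · exact mul_nonpos_of_nonneg_of_nonpos hc (neg_nonpos.mpr (hLnonneg f hf))

theorem rpow_one_div_le_mul_iSup_iff [Nonempty K] {t : K → ℝ} (ht : Continuous t)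
    (ht0 : ∀ φ, 0 ≤ t φ) {s C p : ℝ} (hs : 0 ≤ s) (hC : 0 ≤ C) (hp : 0 < p) :
    s ^ (1 / p) ≤ C * ⨆ φ, t φ ^ (1 / p) ↔ ∃ φ, s ≤ C ^ p * t φ := by
  obtain ⟨φ₀, -, hφ₀⟩ := isCompact_univ.exists_isMaxOn univ_nonempty ht.continuousOn
  have hsup : ⨆ φ, t φ ^ (1 / p) = t φ₀ ^ (1 / p) :=
    ciSup_eq_of_forall_le_of_forall_lt_exists_gt
      (fun φ => Real.rpow_le_rpow (ht0 φ) (hφ₀ (mem_univ φ)) (by positivity)) fun _ hw => ⟨φ₀, hw⟩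
  rw [hsup, rpow_one_div_le_mul_rpow_one_div_iff hs (ht0 φ₀) hC hp]
  exact ⟨fun h => ⟨φ₀, h⟩, fun ⟨φ, h⟩ =>
    h.trans (mul_le_mul_of_nonneg_left (hφ₀ (mem_univ φ)) (Real.rpow_nonneg hC p))⟩

variable [T2Space K] [MeasurableSpace K] [BorelSpace K]

theorem exists_isProbabilityMeasure_integral_eq (Λ : C(K, ℝ) →ₚ[ℝ] ℝ) (hΛ : Λ 1 = 1) :
    ∃ μ : Measure K, IsProbabilityMeasure μ ∧ ∀ f : C(K, ℝ), ∫ φ, f φ ∂μ = Λ f := by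
  let Λc : C_c(K, ℝ) →ₚ[ℝ] ℝ :=
    { toFun f := Λ f.toContinuousMap
      map_add' f g := map_add Λ _ _
      map_smul' c f := map_smul Λ c _
      monotone' f g hfg := Λ.monotone' hfg }
  have hμ : ∀ f : C(K, ℝ), ∫ φ, f φ ∂(RealRMK.rieszMeasure Λc) = Λ f := fun f =>
    RealRMK.integral_rieszMeasure Λc (CompactlySupportedContinuousMap.continuousMapEquiv f)
  refine ⟨RealRMK.rieszMeasure Λc, ⟨?_⟩, hμ⟩
  have := hμ 1
  simp only [ContinuousMap.one_apply, integral_const, smul_eq_mul, mul_one, hΛ] at this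
  exact (ENNReal.toReal_eq_one_iff _).mp this

theorem exists_isProbabilityMeasure_forall_integral_nonpos (g : ι → C(K, ℝ))
    (h : ∀ (m : ℕ) (i : Fin m → ι), ∃ φ, ∑ j, g (i j) φ ≤ 0) :
    ∃ μ : Measure K, IsProbabilityMeasure μ ∧ ∀ i, ∫ φ, g i φ ∂μ ≤ 0 := by
  obtain ⟨Λ, hΛ1, hΛg⟩ :=
    exists_positiveLinearMap_of_forall_exists_nonpos _ (forall_mem_hull_exists_nonpos h)
  obtain ⟨μ, hμ, hμΛ⟩ := exists_isProbabilityMeasure_integral_eq Λ hΛ1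
  exact ⟨μ, hμ, fun i => (hμΛ (g i)).trans_le (hΛg _ (PointedCone.subset_hull ⟨i, rfl⟩))⟩

theorem forall_exists_sum_le_iff_exists_isProbabilityMeasure (a : ι → ℝ) (r : ι → C(K, ℝ)) :
    (∀ (m : ℕ) (i : Fin m → ι), ∃ φ, ∑ j, a (i j) ≤ ∑ j, r (i j) φ) ↔
      ∃ μ : Measure K, IsProbabilityMeasure μ ∧ ∀ i, a i ≤ ∫ φ, r i φ ∂μ := by
  have hint : ∀ (μ : Measure K) [IsFiniteMeasure μ] (f : C(K, ℝ)), Integrable f μ := fun μ _ f =>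
    f.continuous.integrable_of_hasCompactSupport (HasCompactSupport.of_compactSpace _)
  constructor
  · intro h
    obtain ⟨μ, hμ, hg⟩ := exists_isProbabilityMeasure_forall_integral_nonpos
      (fun i => ContinuousMap.const K (a i) - r i) fun m i => by
        obtain ⟨φ, hφ⟩ := h m i
        exact ⟨φ, by simpa using hφ⟩
    refine ⟨μ, hμ, fun i => ?_⟩
    have := hg i
    simp only [ContinuousMap.sub_apply, ContinuousMap.const_apply] at this
    rw [integral_sub (integrable_const _) (hint μ (r i)), integral_const] at this
    simpa [sub_nonpos] using this
  · rintro ⟨μ, hμ, hle⟩ m i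
    obtain ⟨φ, hφ⟩ := exists_integral_le (hint μ (∑ j, r (i j)))
    refine ⟨φ, (Finset.sum_le_sum fun j _ => hle (i j)).trans ?_⟩
    simpa [integral_finsetSum _ fun j _ => hint μ (r (i j))] using hφ

end Pietsch

open Pietsch in
theorem pietsch_domination_of_two_general
    {X Y E G K : Type*}
    [TopologicalSpace K] [CompactSpace K] [T2Space K] [Nonempty K]
    [MeasurableSpace K] [BorelSpace K]
    (R : K → E → G → ℝ) (S : (X → Y) → E → G → ℝ)
    (hR0 : ∀ φ x b, 0 ≤ R φ x b) (hS0 : ∀ f x b, 0 ≤ S f x b)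
    (p : ℝ) (hp : 0 < p)
    (h2 : ∀ x b, Continuous fun φ => R φ x b)
    (f : X → Y) :
    (∃ C > 0, ∀ (m : ℕ) (x : Fin m → E) (b : Fin m → G),
        (∑ j, S f (x j) (b j) ^ p) ^ (1 / p) ≤
          C * ⨆ φ : K, (∑ j, R φ (x j) (b j) ^ p) ^ (1 / p)) ↔
    (∃ C > 0, ∃ μ : Measure K, IsProbabilityMeasure μ ∧
        ∀ (x : E) (b : G),
          S f x b ≤ C * (∫ φ, R φ x b ^ p ∂μ) ^ (1 / p)) := by
  have hRp : ∀ x b, Continuous fun φ => R φ x b ^ p := fun x b =>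
    (h2 x b).rpow_const fun _ => Or.inr hp.le
  have hRp0 : ∀ φ x b, 0 ≤ R φ x b ^ p := fun φ x b => Real.rpow_nonneg (hR0 φ x b) p
  have hSp0 : ∀ x b, 0 ≤ S f x b ^ p := fun x b => Real.rpow_nonneg (hS0 f x b) p
  refine exists_congr fun C => and_congr_right fun hC => ?_
  let r : E × G → C(K, ℝ) := fun q => ⟨fun φ => C ^ p * R φ q.1 q.2 ^ p,
    continuous_const.mul (hRp q.1 q.2)⟩
  have hsumming : ∀ (m : ℕ) (x : Fin m → E) (b : Fin m → G),
      (∑ j, S f (x j) (b j) ^ p) ^ (1 / p) ≤ C * ⨆ φ : K, (∑ j, R φ (x j) (b j) ^ p) ^ (1 / p) ↔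
        ∃ φ, ∑ j, S f (x j) (b j) ^ p ≤ ∑ j, r (x j, b j) φ := fun m x b => by
    rw [rpow_one_div_le_mul_iSup_iff (continuous_finsetSum _ fun j _ => hRp (x j) (b j))
      (fun φ => Finset.sum_nonneg fun j _ => hRp0 φ (x j) (b j))
      (Finset.sum_nonneg fun j _ => hSp0 (x j) (b j)) hC.le hp]
    simp [r, Finset.mul_sum]
  have hdominated : ∀ (μ : Measure K) (x : E) (b : G),
      S f x b ≤ C * (∫ φ, R φ x b ^ p ∂μ) ^ (1 / p) ↔ S f x b ^ p ≤ ∫ φ, r (x, b) φ ∂μ := by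
    intro μ x b
    have hr : ∫ φ, r (x, b) φ ∂μ = C ^ p * ∫ φ, R φ x b ^ p ∂μ := integral_const_mul _ _
    rw [hr, ← rpow_one_div_le_mul_rpow_one_div_iff (hSp0 x b) (integral_nonneg (hRp0 · x b)) hC.le
      hp, one_div, Real.rpow_rpow_inv (hS0 f x b) hp.ne']
  simp only [hsumming, hdominated]
  refine Iff.trans ?_ ((forall_exists_sum_le_iff_exists_isProbabilityMeasure
    (fun q => S f q.1 q.2 ^ p) r).trans ?_)
  · exact forall_congr' fun m =>
      ⟨fun h i => h (Prod.fst ∘ i) (Prod.snd ∘ i), fun h x b => h fun j => (x j, b j)⟩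
  · simp only [Prod.forall]

/-- **The main result**: the Unified Pietsch Domination Theorem holds assuming
only hypothesis (2) on `R` (continuity of `φ ↦ R φ x b`), with no hypothesis
on `S`.  A map `f ∈ ℋ` is `RS`-abstract `p`-summing iff there are a constant
`C > 0` and a Borel probability measure `μ` on `K` with
`S f x b ≤ C * (∫ R φ x b ^ p dμ)^(1/p)` for all `x ∈ E`, `b ∈ G`. -/
theorem pietsch_domination_of_two
    {X Y E G K : Type*} [Nonempty X] [Nonempty Y] [Nonempty E]
    [NormedAddCommGroup G] [NormedSpace ℝ G] [CompleteSpace G]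
    [TopologicalSpace K] [CompactSpace K] [T2Space K] [Nonempty K]
    [MeasurableSpace K] [BorelSpace K]
    (ℋ : Set (X → Y)) (hℋ : ℋ.Nonempty)
    (R : K → E → G → ℝ) (S : (X → Y) → E → G → ℝ)
    (hR0 : ∀ φ x b, 0 ≤ R φ x b) (hS0 : ∀ f x b, 0 ≤ S f x b)
    (p : ℝ) (hp : 0 < p)
    (h2 : ∀ x b, Continuous fun φ => R φ x b)
    (f : X → Y) (hf : f ∈ ℋ) :
    (∃ C > 0, ∀ (m : ℕ) (x : Fin m → E) (b : Fin m → G),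
        (∑ j, S f (x j) (b j) ^ p) ^ (1 / p) ≤
          C * ⨆ φ : K, (∑ j, R φ (x j) (b j) ^ p) ^ (1 / p)) ↔
    (∃ C > 0, ∃ μ : Measure K, IsProbabilityMeasure μ ∧
        ∀ (x : E) (b : G),
          S f x b ≤ C * (∫ φ, R φ x b ^ p ∂μ) ^ (1 / p)) :=
  pietsch_domination_of_two_general R S hR0 hS0 p hp h2 f
end

section
/- Let X, Y, E be nonempty sets, ℋ a nonempty family of mappings from X to Y, G a Banach space, K a compact Hausdorff topological space, 0 < p < ∞, and let R : K × E × G → [0,∞) and S : ℋ × E × G → [0,∞) be maps satisfying properties (1), (2) and (3): (1) for each f ∈ ℋ there is x₀ ∈ E with R(φ, x₀, b) = S(f, x₀, b) = 0 for every φ ∈ K and b ∈ G; (2) for every x ∈ E and b ∈ G the map φ ↦ R(φ, x, b) is continuous on K; (3) for every φ ∈ K, x ∈ E, 0 ≤ η ≤ 1, b ∈ G and f ∈ ℋ one has R(φ, x, ηb) ≤ η R(φ, x, b) and η S(f, x, b) ≤ S(f, x, ηb). Then f ∈ ℋ is RS-abstract p-summing if and only if there exist a constant C > 0 and a Borel probability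 measure μ on K such that S(f, x, b) ≤ C (∫_K R(φ, x, b)^p dμ(φ))^{1/p} for all x ∈ E and b ∈ G. -/
/-! Taking `p`-th powers, both sides become statements about the functions
`φ ↦ ∑ⱼ (S f xⱼ bⱼ ^ p - C ^ p * R φ xⱼ bⱼ ^ p)` on `K`: the summing inequality says that each of
them is nonpositive somewhere, domination says that each has nonpositive integral against a single
probability measure. By hypothesis (3) the functions dominated by one of them form a convex set, so
Hahn–Banach separates this set from the open cone of positive functions, and by
Riesz–Markov–Kakutani the normalised separating functional is integration against a probability
measure. -/

open MeasureTheory CompactlySupported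

lemma le_mul_rpow_one_div_iff {a b C p : ℝ} (ha : 0 ≤ a) (hb : 0 ≤ b) (hC : 0 ≤ C)
    (hp : 0 < p) : a ≤ C * b ^ (1 / p) ↔ a ^ p ≤ C ^ p * b := by
  rw [← Real.rpow_le_rpow_iff ha (by positivity) hp, Real.mul_rpow hC (by positivity),
    one_div, Real.rpow_inv_rpow hb hp.ne']

lemma rpow_one_div_le_mul_iSup_iff {ι : Type*} [TopologicalSpace ι] [CompactSpace ι]
    [Nonempty ι] {A : ι → ℝ} (hA : Continuous A) (hA0 : ∀ i, 0 ≤ A i) {a C p : ℝ}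
    (ha : 0 ≤ a) (hC : 0 ≤ C) (hp : 0 < p) :
    a ^ (1 / p) ≤ C * ⨆ i, A i ^ (1 / p) ↔ ∃ i, a ≤ C ^ p * A i := by
  obtain ⟨i₀, -, hi₀⟩ := isCompact_univ.exists_isMaxOn Set.univ_nonempty hA.continuousOn
  have hmax : ∀ i, A i ^ (1 / p) ≤ A i₀ ^ (1 / p) := fun i =>
    Real.rpow_le_rpow (hA0 i) (hi₀ (Set.mem_univ i)) (by positivity)
  have hsup : ⨆ i, A i ^ (1 / p) = A i₀ ^ (1 / p) :=
    le_antisymm (ciSup_le hmax) (le_ciSup ⟨_, Set.forall_mem_range.2 hmax⟩ i₀)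
  rw [hsup, le_mul_rpow_one_div_iff (by positivity) (hA0 i₀) hC hp, one_div,
    Real.rpow_inv_rpow ha hp.ne']
  refine ⟨fun h => ⟨i₀, h⟩, fun ⟨i, hi⟩ => hi.trans ?_⟩
  exact mul_le_mul_of_nonneg_left (hi₀ (Set.mem_univ i)) (by positivity)

namespace ContinuousMap

variable {K : Type*} [TopologicalSpace K] [CompactSpace K]

lemma isOpen_setOf_forall_pos : IsOpen {u : C(K, ℝ) | ∀ φ, 0 < u φ} := by
  simpa [Set.MapsTo] using
    isOpen_setOfPred_mapsTo (isCompact_univ (X := K)) (isOpen_Ioi (a := (0 : ℝ)))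

variable [T2Space K] [MeasurableSpace K] [BorelSpace K]

lemma exists_isProbabilityMeasure_integral_eq (Λ : C(K, ℝ) →ₚ[ℝ] ℝ) (hΛ : Λ 1 = 1) :
    ∃ μ : Measure K, IsProbabilityMeasure μ ∧ ∀ u : C(K, ℝ), ∫ φ, u φ ∂μ = Λ u := by
  let Λc : C_c(K, ℝ) →ₚ[ℝ] ℝ :=
    { toFun g := Λ g
      map_add' g h := map_add Λ (g : C(K, ℝ)) h
      map_smul' c g := map_smul Λ c (g : C(K, ℝ))
      monotone' g h hgh := Λ.monotone' hgh }
  have hint (u : C(K, ℝ)) : ∫ φ, u φ ∂(RealRMK.rieszMeasure Λc) = Λ u :=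
    RealRMK.integral_rieszMeasure Λc (CompactlySupportedContinuousMap.continuousMapEquiv u)
  refine ⟨RealRMK.rieszMeasure Λc, ⟨?_⟩, hint⟩
  have h1 : (RealRMK.rieszMeasure Λc).real Set.univ = 1 := by simpa [hΛ] using hint 1
  rw [← ofReal_measureReal, h1, ENNReal.ofReal_one]

theorem exists_isProbabilityMeasure_forall_integral_nonpos {D : Set C(K, ℝ)} (hD : Convex ℝ D)
    (h0 : (0 : C(K, ℝ)) ∈ D) (hD_nonpos : ∀ u ∈ D, ∃ φ, u φ ≤ 0) :
    ∃ μ : Measure K, IsProbabilityMeasure μ ∧ ∀ u ∈ D, ∫ φ, u φ ∂μ ≤ 0 := by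
  set P : Set C(K, ℝ) := {u | ∀ φ, 0 < u φ}
  have hP : Convex ℝ P := fun u hu v hv a b ha hb hab φ => by
    simp only [add_apply, coe_smul, Pi.smul_apply, smul_eq_mul]
    rcases ha.eq_or_lt with rfl | ha
    · obtain rfl : b = 1 := by simpa using hab
      simpa using hv φ
    · exact add_pos_of_pos_of_nonneg (mul_pos ha (hu φ)) (mul_nonneg hb (hv φ).le)
  have hPD : Disjoint P D := Set.disjoint_left.2 fun u hu huD =>
    let ⟨φ, hφ⟩ := hD_nonpos u huD; (hu φ).not_ge hφ
  obtain ⟨L, c, hLP, hLD⟩ := geometric_hahn_banach_open hP isOpen_setOf_forall_pos hD hPD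
  -- Since `P` is a cone, `c = 0` and `L ≤ 0` on nonnegative functions.
  have hc_nonpos : c ≤ 0 := by simpa using hLD 0 h0
  have hL1 : L 1 < 0 := (hLP 1 fun _ => one_pos).trans_le hc_nonpos
  have hc_nonneg : 0 ≤ c := by
    by_contra! hc_neg
    have := hLP ((c / L 1) • 1) fun φ => by simp [div_pos_of_neg_of_neg hc_neg hL1]
    rw [map_smul, smul_eq_mul, div_mul_cancel₀ _ hL1.ne] at this
    exact this.false
  have hL_nonpos : ∀ u : C(K, ℝ), 0 ≤ u → L u ≤ 0 := by
    intro u hu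
    by_contra! hLu
    have := hLP (u + (L u / -L 1) • 1) fun φ => by
      have : 0 < L u / -L 1 := div_pos hLu (neg_pos.2 hL1)
      simpa using add_pos_of_nonneg_of_pos (hu φ) this
    rw [map_add, map_smul, smul_eq_mul, div_mul_eq_mul_div, mul_div_assoc, div_neg,
      div_self hL1.ne] at this
    linarith
  let Λ : C(K, ℝ) →ₚ[ℝ] ℝ := PositiveLinearMap.mk₀ ((-L 1)⁻¹ • -(L : C(K, ℝ) →ₗ[ℝ] ℝ))
    fun u hu => mul_nonneg (inv_nonneg.2 (neg_nonneg.2 hL1.le)) (neg_nonneg.2 (hL_nonpos u hu))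
  obtain ⟨μ, hμ, hint⟩ := exists_isProbabilityMeasure_integral_eq Λ (by
    change (-L 1)⁻¹ * -L 1 = 1
    exact inv_mul_cancel₀ (neg_ne_zero.2 hL1.ne))
  refine ⟨μ, hμ, fun u hu => ?_⟩
  rw [hint]
  exact mul_nonpos_of_nonneg_of_nonpos (inv_nonneg.2 (neg_nonneg.2 hL1.le))
    (neg_nonpos.2 (hc_nonneg.trans (hLD u hu)))

end ContinuousMap

section PietschSet

variable {K E G : Type*} [TopologicalSpace K]

def pietschSet (R : K → E → G → ℝ) (s : E → G → ℝ) (p c : ℝ) : Set C(K, ℝ) :=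
  {u | ∃ (m : ℕ) (x : Fin m → E) (b : Fin m → G),
    ∀ φ, u φ ≤ ∑ j, (s (x j) (b j) ^ p - c * R φ (x j) (b j) ^ p)}

variable {R : K → E → G → ℝ} {s : E → G → ℝ} {p c : ℝ}

lemma zero_mem_pietschSet : (0 : C(K, ℝ)) ∈ pietschSet R s p c :=
  ⟨0, Fin.elim0, Fin.elim0, fun φ => by simp⟩

lemma add_mem_pietschSet {u v : C(K, ℝ)} (hu : u ∈ pietschSet R s p c)
    (hv : v ∈ pietschSet R s p c) : u + v ∈ pietschSet R s p c := by
  obtain ⟨m, x, b, hu⟩ := hu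
  obtain ⟨n, y, d, hv⟩ := hv
  refine ⟨m + n, Fin.append x y, Fin.append b d, fun φ => ?_⟩
  rw [Fin.sum_univ_add]
  simp only [Fin.append_left, Fin.append_right, ContinuousMap.add_apply]
  exact add_le_add (hu φ) (hv φ)

lemma smul_mem_pietschSet [SMul ℝ G] (hR0 : ∀ φ x b, 0 ≤ R φ x b) (hs0 : ∀ x b, 0 ≤ s x b)
    (hR : ∀ φ x b (η : ℝ), 0 ≤ η → η ≤ 1 → R φ x (η • b) ≤ η * R φ x b)
    (hs : ∀ x b (η : ℝ), 0 ≤ η → η ≤ 1 → η * s x b ≤ s x (η • b))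
    (hp : 0 < p) (hc : 0 ≤ c) {t : ℝ} (ht0 : 0 ≤ t) (ht1 : t ≤ 1) {u : C(K, ℝ)}
    (hu : u ∈ pietschSet R s p c) : t • u ∈ pietschSet R s p c := by
  obtain ⟨m, x, b, hu⟩ := hu
  set η := t ^ (1 / p) with hη
  have hη0 : 0 ≤ η := by positivity
  have hη1 : η ≤ 1 := Real.rpow_le_one ht0 ht1 (by positivity)
  have hηp : η ^ p = t := by rw [hη, one_div, Real.rpow_inv_rpow ht0 hp.ne']
  refine ⟨m, x, fun j => η • b j, fun φ => ?_⟩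
  calc (t • u) φ = t * u φ := rfl
    _ ≤ t * ∑ j, (s (x j) (b j) ^ p - c * R φ (x j) (b j) ^ p) :=
      mul_le_mul_of_nonneg_left (hu φ) ht0
    _ = ∑ j, ((η * s (x j) (b j)) ^ p - c * (η * R φ (x j) (b j)) ^ p) := by
      rw [Finset.mul_sum]
      refine Finset.sum_congr rfl fun j _ => ?_
      rw [Real.mul_rpow hη0 (hs0 _ _), Real.mul_rpow hη0 (hR0 _ _ _), hηp]
      ring
    _ ≤ _ := by
      gcongr with j
      exacts [mul_nonneg hη0 (hs0 _ _), hs _ _ _ hη0 hη1, hR0 _ _ _, hR _ _ _ _ hη0 hη1]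

lemma convex_pietschSet [SMul ℝ G] (hR0 : ∀ φ x b, 0 ≤ R φ x b) (hs0 : ∀ x b, 0 ≤ s x b)
    (hR : ∀ φ x b (η : ℝ), 0 ≤ η → η ≤ 1 → R φ x (η • b) ≤ η * R φ x b)
    (hs : ∀ x b (η : ℝ), 0 ≤ η → η ≤ 1 → η * s x b ≤ s x (η • b))
    (hp : 0 < p) (hc : 0 ≤ c) : Convex ℝ (pietschSet R s p c) :=
  fun _ hu _ hv _ _ ha hb hab => add_mem_pietschSet
    (smul_mem_pietschSet hR0 hs0 hR hs hp hc ha (by linarith) hu)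
    (smul_mem_pietschSet hR0 hs0 hR hs hp hc hb (by linarith) hv)

lemma exists_nonpos_of_mem_pietschSet
    (hsum : ∀ m (x : Fin m → E) (b : Fin m → G),
      ∃ φ, ∑ j, s (x j) (b j) ^ p ≤ c * ∑ j, R φ (x j) (b j) ^ p)
    {u : C(K, ℝ)} (hu : u ∈ pietschSet R s p c) : ∃ φ, u φ ≤ 0 := by
  obtain ⟨m, x, b, hu⟩ := hu
  obtain ⟨φ, hφ⟩ := hsum m x b
  refine ⟨φ, (hu φ).trans ?_⟩
  rw [Finset.sum_sub_distrib, ← Finset.mul_sum]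
  linarith

variable [CompactSpace K] [MeasurableSpace K] [OpensMeasurableSpace K] {μ : Measure K}
  [IsProbabilityMeasure μ]

lemma rpow_le_mul_integral_of_forall_integral_nonpos
    (hR : ∀ x b, Continuous fun φ => R φ x b ^ p)
    (hμ : ∀ u ∈ pietschSet R s p c, ∫ φ, u φ ∂μ ≤ 0) (x : E) (b : G) :
    s x b ^ p ≤ c * ∫ φ, R φ x b ^ p ∂μ := by
  let u : C(K, ℝ) := ⟨fun φ => s x b ^ p - c * R φ x b ^ p, by fun_prop⟩
  have hu : u ∈ pietschSet R s p c := ⟨1, fun _ => x, fun _ => b, fun φ => by simp [u]⟩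
  have hint : Integrable (fun φ => R φ x b ^ p) μ :=
    (hR x b).integrable_of_hasCompactSupport (.of_compactSpace _)
  have : ∫ φ, (s x b ^ p - c * R φ x b ^ p) ∂μ ≤ 0 := hμ u hu
  rw [integral_sub (integrable_const _) (hint.const_mul c), integral_const,
    integral_const_mul] at this
  simpa [sub_nonpos] using this

lemma exists_sum_rpow_le_of_forall_rpow_le_integral
    (hR : ∀ x b, Continuous fun φ => R φ x b ^ p)
    (hμ : ∀ x b, s x b ^ p ≤ c * ∫ φ, R φ x b ^ p ∂μ) (hc : 0 ≤ c)
    (m : ℕ) (x : Fin m → E) (b : Fin m → G) :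
    ∃ φ, ∑ j, s (x j) (b j) ^ p ≤ c * ∑ j, R φ (x j) (b j) ^ p := by
  have hint (j : Fin m) : Integrable (fun φ => R φ (x j) (b j) ^ p) μ :=
    (hR _ _).integrable_of_hasCompactSupport (.of_compactSpace _)
  obtain ⟨φ, hφ⟩ := exists_integral_le (integrable_finsetSum Finset.univ fun j _ => hint j)
  refine ⟨φ, ?_⟩
  calc ∑ j, s (x j) (b j) ^ p ≤ ∑ j, c * ∫ φ, R φ (x j) (b j) ^ p ∂μ :=
        Finset.sum_le_sum fun j _ => hμ _ _
    _ = c * ∫ φ, ∑ j, R φ (x j) (b j) ^ p ∂μ := by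
        rw [← Finset.mul_sum, integral_finsetSum _ fun j _ => hint j]
    _ ≤ c * ∑ j, R φ (x j) (b j) ^ p := mul_le_mul_of_nonneg_left hφ hc

end PietschSet

theorem pietsch_domination_rpow {K E G : Type*} [TopologicalSpace K] [CompactSpace K]
    [T2Space K] [MeasurableSpace K] [BorelSpace K] [SMul ℝ G]
    {R : K → E → G → ℝ} {s : E → G → ℝ} {p c : ℝ}
    (hR0 : ∀ φ x b, 0 ≤ R φ x b) (hs0 : ∀ x b, 0 ≤ s x b)
    (hRc : ∀ x b, Continuous fun φ => R φ x b)
    (hR : ∀ φ x b (η : ℝ), 0 ≤ η → η ≤ 1 → R φ x (η • b) ≤ η * R φ x b)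
    (hs : ∀ x b (η : ℝ), 0 ≤ η → η ≤ 1 → η * s x b ≤ s x (η • b))
    (hp : 0 < p) (hc : 0 ≤ c) :
    (∀ m (x : Fin m → E) (b : Fin m → G),
      ∃ φ, ∑ j, s (x j) (b j) ^ p ≤ c * ∑ j, R φ (x j) (b j) ^ p) ↔
    ∃ μ : Measure K, IsProbabilityMeasure μ ∧
      ∀ x b, s x b ^ p ≤ c * ∫ φ, R φ x b ^ p ∂μ := by
  have hRp (x : E) (b : G) : Continuous fun φ => R φ x b ^ p :=
    (hRc x b).rpow_const fun _ => Or.inr hp.le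
  constructor
  · intro hsum
    obtain ⟨μ, hμ, hint⟩ := ContinuousMap.exists_isProbabilityMeasure_forall_integral_nonpos
      (convex_pietschSet hR0 hs0 hR hs hp hc) zero_mem_pietschSet
      fun _ => exists_nonpos_of_mem_pietschSet hsum
    exact ⟨μ, hμ, rpow_le_mul_integral_of_forall_integral_nonpos hRp hint⟩
  · rintro ⟨μ, hμ, hdom⟩
    exact exists_sum_rpow_le_of_forall_rpow_le_integral hRp hdom hc

theorem unified_pietsch_domination_general
    {X Y E G K : Type*}
    [NormedAddCommGroup G] [NormedSpace ℝ G]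
    [TopologicalSpace K] [CompactSpace K] [T2Space K] [Nonempty K]
    [MeasurableSpace K] [BorelSpace K]
    (ℋ : Set (X → Y))
    (R : K → E → G → ℝ) (S : (X → Y) → E → G → ℝ)
    (hR0 : ∀ φ x b, 0 ≤ R φ x b) (hS0 : ∀ f x b, 0 ≤ S f x b)
    (p : ℝ) (hp : 0 < p)
    (h2 : ∀ x b, Continuous fun φ => R φ x b)
    (h3R : ∀ (φ : K) (x : E) (b : G) (η : ℝ), 0 ≤ η → η ≤ 1 →
      R φ x (η • b) ≤ η * R φ x b)
    (h3S : ∀ f ∈ ℋ, ∀ (x : E) (b : G) (η : ℝ), 0 ≤ η → η ≤ 1 →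
      η * S f x b ≤ S f x (η • b))
    (f : X → Y) (hf : f ∈ ℋ) :
    (∃ C > 0, ∀ (m : ℕ) (x : Fin m → E) (b : Fin m → G),
        (∑ j, S f (x j) (b j) ^ p) ^ (1 / p) ≤
          C * ⨆ φ : K, (∑ j, R φ (x j) (b j) ^ p) ^ (1 / p)) ↔
    (∃ C > 0, ∃ μ : Measure K, IsProbabilityMeasure μ ∧
        ∀ (x : E) (b : G),
          S f x b ≤ C * (∫ φ, R φ x b ^ p ∂μ) ^ (1 / p)) := by
  have hRp_nonneg (φ : K) (x : E) (b : G) : 0 ≤ R φ x b ^ p := Real.rpow_nonneg (hR0 φ x b) p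
  have hsum_iff (C : ℝ) (hC : 0 ≤ C) :
      (∀ m (x : Fin m → E) (b : Fin m → G), (∑ j, S f (x j) (b j) ^ p) ^ (1 / p) ≤
        C * ⨆ φ : K, (∑ j, R φ (x j) (b j) ^ p) ^ (1 / p)) ↔
      ∀ m (x : Fin m → E) (b : Fin m → G),
        ∃ φ, ∑ j, S f (x j) (b j) ^ p ≤ C ^ p * ∑ j, R φ (x j) (b j) ^ p :=
    forall₃_congr fun m x b => rpow_one_div_le_mul_iSup_iff
      (continuous_finsetSum _ fun j _ => (h2 _ _).rpow_const fun _ => Or.inr hp.le)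
      (fun φ => Finset.sum_nonneg fun j _ => hRp_nonneg _ _ _)
      (Finset.sum_nonneg fun j _ => Real.rpow_nonneg (hS0 _ _ _) p) hC hp
  have hdom_iff (C : ℝ) (hC : 0 ≤ C) (μ : Measure K) :
      (∀ x b, S f x b ≤ C * (∫ φ, R φ x b ^ p ∂μ) ^ (1 / p)) ↔
      ∀ x b, S f x b ^ p ≤ C ^ p * ∫ φ, R φ x b ^ p ∂μ :=
    forall₂_congr fun x b => le_mul_rpow_one_div_iff (hS0 f x b)
      (integral_nonneg fun φ => hRp_nonneg φ x b) hC hp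
  have pietsch (C : ℝ) (hC : 0 < C) := pietsch_domination_rpow (c := C ^ p) hR0 (hS0 f) h2 h3R
    (h3S f hf) hp (by positivity)
  constructor
  · rintro ⟨C, hC, hsum⟩
    obtain ⟨μ, hμ, hdom⟩ := (pietsch C hC).1 ((hsum_iff C hC.le).1 hsum)
    exact ⟨C, hC, μ, hμ, (hdom_iff C hC.le μ).2 hdom⟩
  · rintro ⟨C, hC, μ, hμ, hdom⟩
    exact ⟨C, hC, (hsum_iff C hC.le).2 ((pietsch C hC).2 ⟨μ, hμ, (hdom_iff C hC.le μ).1 hdom⟩)⟩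

/-- **Unified Pietsch Domination Theorem** (Botelho–Pellegrino–Rueda):
under hypotheses (1), (2) and (3) on `R` and `S`, a map `f ∈ ℋ` is
`RS`-abstract `p`-summing iff there are a constant `C > 0` and a Borel
probability measure `μ` on `K` with
`S f x b ≤ C * (∫ R φ x b ^ p dμ)^(1/p)` for all `x ∈ E`, `b ∈ G`. -/
theorem unified_pietsch_domination
    {X Y E G K : Type*} [Nonempty X] [Nonempty Y] [Nonempty E]
    [NormedAddCommGroup G] [NormedSpace ℝ G] [CompleteSpace G]
    [TopologicalSpace K] [CompactSpace K] [T2Space K] [Nonempty K]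
    [MeasurableSpace K] [BorelSpace K]
    (ℋ : Set (X → Y)) (hℋ : ℋ.Nonempty)
    (R : K → E → G → ℝ) (S : (X → Y) → E → G → ℝ)
    (hR0 : ∀ φ x b, 0 ≤ R φ x b) (hS0 : ∀ f x b, 0 ≤ S f x b)
    (p : ℝ) (hp : 0 < p)
    (h1 : ∀ f ∈ ℋ, ∃ x₀ : E, ∀ (φ : K) (b : G),
      R φ x₀ b = 0 ∧ S f x₀ b = 0)
    (h2 : ∀ x b, Continuous fun φ => R φ x b)
    (h3R : ∀ (φ : K) (x : E) (b : G) (η : ℝ), 0 ≤ η → η ≤ 1 →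
      R φ x (η • b) ≤ η * R φ x b)
    (h3S : ∀ f ∈ ℋ, ∀ (x : E) (b : G) (η : ℝ), 0 ≤ η → η ≤ 1 →
      η * S f x b ≤ S f x (η • b))
    (f : X → Y) (hf : f ∈ ℋ) :
    (∃ C > 0, ∀ (m : ℕ) (x : Fin m → E) (b : Fin m → G),
        (∑ j, S f (x j) (b j) ^ p) ^ (1 / p) ≤
          C * ⨆ φ : K, (∑ j, R φ (x j) (b j) ^ p) ^ (1 / p)) ↔
    (∃ C > 0, ∃ μ : Measure K, IsProbabilityMeasure μ ∧
        ∀ (x : E) (b : G),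
          S f x b ≤ C * (∫ φ, R φ x b ^ p ∂μ) ^ (1 / p)) :=
  unified_pietsch_domination_general ℋ R S hR0 hS0 p hp h2 h3R h3S f hf
end

section
/- Let X, Y, E be nonempty sets, ℋ a nonempty family of mappings from X to Y, G a Banach space, K a compact Hausdorff topological space, 0 < p < ∞, and let R : K × E × G → [0,∞) and S : ℋ × E × G → [0,∞) be maps. Suppose f ∈ ℋ and C > 0 satisfy (Σ_{j=1}^m S(f, x_j, b_j)^p)^{1/p} ≤ C sup_{φ ∈ K} (Σ_{j=1}^m R(φ, x_j, b_j)^p)^{1/p} for all x_1, …, x_m ∈ E, b_1, …, b_m ∈ G and m ∈ ℕ. Then the weighted inequality (Σ_{j=1}^m λ_j S(f, x_j, b_j)^p)^{1/p} ≤ C sup_{φ ∈ K} (Σ_{j=1}^m λ_j R(φ, x_j, b_j)^p)^{1/p} holds for all x_1, …, x_m ∈ E, b_1, …, b_m ∈ G, nonnegative real numbers λ_1, …, λ_m and m ∈ ℕ, with the same constant C. -/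
open MeasureTheory

/-- **Mendel–Schechtman weighted inequality**: if `f ∈ ℋ` and `C > 0` satisfy
the unweighted `RS`-abstract `p`-summing inequality, then the weighted
inequality with arbitrary nonnegative real weights `λ₁, …, λₘ` holds with the
same constant `C`. -/
theorem weighted_summing_of_summing
    {X Y E G K : Type*} [Nonempty X] [Nonempty Y] [Nonempty E]
    [NormedAddCommGroup G] [NormedSpace ℝ G] [CompleteSpace G]
    [TopologicalSpace K] [CompactSpace K] [T2Space K] [Nonempty K]
    (ℋ : Set (X → Y)) (hℋ : ℋ.Nonempty)
    (R : K → E → G → ℝ) (S : (X → Y) → E → G → ℝ)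
    (hR0 : ∀ φ x b, 0 ≤ R φ x b) (hS0 : ∀ f x b, 0 ≤ S f x b)
    (p : ℝ) (hp : 0 < p)
    (f : X → Y) (hf : f ∈ ℋ) (C : ℝ) (hC : 0 < C)
    (hsum : ∀ (m : ℕ) (x : Fin m → E) (b : Fin m → G),
      (∑ j, S f (x j) (b j) ^ p) ^ (1 / p) ≤
        C * ⨆ φ : K, (∑ j, R φ (x j) (b j) ^ p) ^ (1 / p)) :
    ∀ (m : ℕ) (x : Fin m → E) (b : Fin m → G) (lam : Fin m → ℝ),
      (∀ j, 0 ≤ lam j) →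
      (∑ j, lam j * S f (x j) (b j) ^ p) ^ (1 / p) ≤
        C * ⨆ φ : K, (∑ j, lam j * R φ (x j) (b j) ^ p) ^ (1 / p) := by
  intro m x b lam hlam
  have hp1 : (0:ℝ) < 1 / p := by positivity
  set T : K → ℝ := fun φ => ∑ j, R φ (x j) (b j) ^ p with hTdef
  have hTnn : ∀ φ, 0 ≤ T φ := fun φ =>
    Finset.sum_nonneg fun j _ => Real.rpow_nonneg (hR0 _ _ _) _
  set W : K → ℝ := fun φ => (∑ j, lam j * R φ (x j) (b j) ^ p) ^ (1/p) with hWdef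
  have hWnn : ∀ φ, 0 ≤ W φ := fun φ =>
    Real.rpow_nonneg (Finset.sum_nonneg fun j _ =>
      mul_nonneg (hlam j) (Real.rpow_nonneg (hR0 _ _ _) _)) _
  have hRHSnn : 0 ≤ C * ⨆ φ : K, W φ :=
    mul_nonneg hC.le (Real.iSup_nonneg hWnn)
  -- generalized unweighted inequality over any finite index type
  have hsum' : ∀ (ι : Type) [Fintype ι], ∀ (x' : ι → E) (b' : ι → G),
      (∑ j, S f (x' j) (b' j) ^ p) ^ (1/p) ≤
        C * ⨆ φ : K, (∑ j, R φ (x' j) (b' j) ^ p) ^ (1/p) := by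
    intro ι _ x' b'
    have e := Fintype.equivFin ι
    have h := hsum (Fintype.card ι) (x' ∘ e.symm) (b' ∘ e.symm)
    have h1 : ∑ j, S f ((x' ∘ e.symm) j) ((b' ∘ e.symm) j) ^ p
        = ∑ i, S f (x' i) (b' i) ^ p :=
      Fintype.sum_equiv e.symm _ _ fun j => rfl
    have h2 : ∀ φ : K, (∑ j, R φ ((x' ∘ e.symm) j) ((b' ∘ e.symm) j) ^ p)
        = ∑ i, R φ (x' i) (b' i) ^ p := fun φ =>
      Fintype.sum_equiv e.symm _ _ fun j => rfl
    calc (∑ i, S f (x' i) (b' i) ^ p) ^ (1/p)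
        = (∑ j, S f ((x' ∘ e.symm) j) ((b' ∘ e.symm) j) ^ p) ^ (1/p) := by rw [h1]
      _ ≤ C * ⨆ φ : K, (∑ j, R φ ((x' ∘ e.symm) j) ((b' ∘ e.symm) j) ^ p) ^ (1/p) := h
      _ = C * ⨆ φ : K, (∑ i, R φ (x' i) (b' i) ^ p) ^ (1/p) := by
          congr 1; exact iSup_congr fun φ => by rw [h2 φ]
  -- natural-number weights
  have hnat : ∀ (n : Fin m → ℕ),
      (∑ j, (n j : ℝ) * S f (x j) (b j) ^ p) ^ (1/p) ≤
        C * ⨆ φ : K, (∑ j, (n j : ℝ) * R φ (x j) (b j) ^ p) ^ (1/p) := by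
    intro n
    have h := hsum' ((j : Fin m) × Fin (n j)) (fun s => x s.1) (fun s => b s.1)
    have h1 : ∑ s : (j : Fin m) × Fin (n j), S f (x s.1) (b s.1) ^ p
        = ∑ j, (n j : ℝ) * S f (x j) (b j) ^ p := by
      rw [← Finset.univ_sigma_univ, Finset.sum_sigma]
      simp [Finset.sum_const, nsmul_eq_mul]
    have h2 : ∀ φ : K, (∑ s : (j : Fin m) × Fin (n j), R φ (x s.1) (b s.1) ^ p)
        = ∑ j, (n j : ℝ) * R φ (x j) (b j) ^ p := by
      intro φ
      rw [← Finset.univ_sigma_univ, Finset.sum_sigma]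
      simp [Finset.sum_const, nsmul_eq_mul]
    rw [h1] at h
    calc (∑ j, (n j : ℝ) * S f (x j) (b j) ^ p) ^ (1/p)
        ≤ C * ⨆ φ : K, (∑ s : (j : Fin m) × Fin (n j), R φ (x s.1) (b s.1) ^ p) ^ (1/p) := h
      _ = C * ⨆ φ : K, (∑ j, (n j : ℝ) * R φ (x j) (b j) ^ p) ^ (1/p) := by
          congr 1; exact iSup_congr fun φ => by rw [h2 φ]
  by_cases hbdd : BddAbove (Set.range T)
  · -- bounded case: approximate weights from below by floor-rationals
    have hWbdd : BddAbove (Set.range W) := by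
      obtain ⟨B, hB⟩ := hbdd
      set M : ℝ := 1 + ∑ j, lam j with hMdef
      have hM0 : 0 ≤ M := by
        have h0 : 0 ≤ ∑ j, lam j := Finset.sum_nonneg fun j _ => hlam j
        rw [hMdef]; linarith
      have hMj : ∀ j, lam j ≤ M := fun j => by
        have : lam j ≤ ∑ j, lam j :=
          Finset.single_le_sum (fun i _ => hlam i) (Finset.mem_univ j)
        linarith
      refine ⟨(M * max B 0) ^ (1/p), ?_⟩
      rintro _ ⟨φ, rfl⟩
      have h1 : ∑ j, lam j * R φ (x j) (b j) ^ p ≤ M * T φ := by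
        rw [Finset.mul_sum]
        exact Finset.sum_le_sum fun j _ =>
          mul_le_mul_of_nonneg_right (hMj j) (Real.rpow_nonneg (hR0 _ _ _) _)
      have h2 : M * T φ ≤ M * max B 0 :=
        mul_le_mul_of_nonneg_left (le_trans (hB ⟨φ, rfl⟩) (le_max_left _ _)) hM0
      exact Real.rpow_le_rpow (Finset.sum_nonneg fun j _ =>
        mul_nonneg (hlam j) (Real.rpow_nonneg (hR0 _ _ _) _)) (h1.trans h2) hp1.le
    have hWle : ∀ φ, W φ ≤ ⨆ φ : K, W φ := fun φ => le_ciSup hWbdd φ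
    -- key estimate for floor weights
    have key : ∀ N : ℕ, 1 ≤ N →
        (∑ j, ((⌊lam j * N⌋₊ : ℝ) / N) * S f (x j) (b j) ^ p) ^ (1/p) ≤
          C * ⨆ φ : K, W φ := by
      intro N hN
      have hNpos : (0:ℝ) < N := by exact_mod_cast hN
      set n : Fin m → ℕ := fun j => ⌊lam j * N⌋₊ with hndef
      set c : ℝ := ((N:ℝ)⁻¹) ^ (1/p) with hcdef
      have hc0 : 0 < c := Real.rpow_pos_of_pos (by positivity) _
      have hdivle : ∀ j, ((n j : ℝ) / N) ≤ lam j := by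
        intro j
        rw [div_le_iff₀ hNpos]
        exact Nat.floor_le (mul_nonneg (hlam j) hNpos.le)
      have hsplit : ∀ (g : Fin m → ℝ), (∀ j, 0 ≤ g j) →
          (∑ j, ((n j : ℝ) / N) * g j) ^ (1/p) = c * (∑ j, (n j : ℝ) * g j) ^ (1/p) := by
        intro g hg
        have : ∑ j, ((n j : ℝ) / N) * g j = (N:ℝ)⁻¹ * ∑ j, (n j : ℝ) * g j := by
          rw [Finset.mul_sum]; exact Finset.sum_congr rfl fun j _ => by ring
        rw [this, Real.mul_rpow (by positivity)
          (Finset.sum_nonneg fun j _ => mul_nonneg (n j).cast_nonneg (hg j))]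
      have hSnn : ∀ j, (0:ℝ) ≤ S f (x j) (b j) ^ p := fun j =>
        Real.rpow_nonneg (hS0 _ _ _) _
      rw [hsplit _ hSnn]
      have hstep : ∀ φ : K, c * (∑ j, (n j : ℝ) * R φ (x j) (b j) ^ p) ^ (1/p) ≤
          ⨆ φ : K, W φ := by
        intro φ
        rw [← hsplit (fun j => R φ (x j) (b j) ^ p)
          (fun j => Real.rpow_nonneg (hR0 _ _ _) _)]
        refine le_trans ?_ (hWle φ)
        apply Real.rpow_le_rpow (Finset.sum_nonneg fun j _ =>
          mul_nonneg (by positivity) (Real.rpow_nonneg (hR0 _ _ _) _)) ?_ hp1.le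
        exact Finset.sum_le_sum fun j _ =>
          mul_le_mul_of_nonneg_right (hdivle j) (Real.rpow_nonneg (hR0 _ _ _) _)
      have hsuple : (⨆ φ : K, (∑ j, (n j : ℝ) * R φ (x j) (b j) ^ p) ^ (1/p)) ≤
          (⨆ φ : K, W φ) / c := by
        refine ciSup_le fun φ => ?_
        rw [le_div_iff₀ hc0, mul_comm]
        exact hstep φ
      calc c * (∑ j, (n j : ℝ) * S f (x j) (b j) ^ p) ^ (1/p)
          ≤ c * (C * ⨆ φ : K, (∑ j, (n j : ℝ) * R φ (x j) (b j) ^ p) ^ (1/p)) :=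
            mul_le_mul_of_nonneg_left (hnat n) hc0.le
        _ ≤ c * (C * ((⨆ φ : K, W φ) / c)) := by
            refine mul_le_mul_of_nonneg_left ?_ hc0.le
            exact mul_le_mul_of_nonneg_left hsuple hC.le
        _ = C * ⨆ φ : K, W φ := by field_simp
    -- pass to the limit N → ∞
    have hterm : ∀ j, Filter.Tendsto
        (fun N : ℕ => ((⌊lam j * N⌋₊ : ℝ) / N) * S f (x j) (b j) ^ p)
        Filter.atTop (nhds (lam j * S f (x j) (b j) ^ p)) := by
      intro j
      exact ((tendsto_nat_floor_mul_div_atTop (hlam j)).comp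
        tendsto_natCast_atTop_atTop).mul_const _
    have htend : Filter.Tendsto
        (fun N : ℕ => (∑ j, ((⌊lam j * N⌋₊ : ℝ) / N) * S f (x j) (b j) ^ p) ^ (1/p))
        Filter.atTop (nhds ((∑ j, lam j * S f (x j) (b j) ^ p) ^ (1/p))) := by
      refine Filter.Tendsto.rpow_const ?_ (Or.inr hp1.le)
      exact tendsto_finset_sum _ fun j _ => hterm j
    refine le_of_tendsto htend ?_
    filter_upwards [Filter.eventually_ge_atTop 1] with N hN using key N hN
  · -- unbounded case: everything on the left vanishes
    have hnb : ¬ BddAbove (Set.range fun φ => T φ ^ (1/p)) := by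
      rintro ⟨M, hM⟩
      apply hbdd
      refine ⟨(max M 0) ^ p, ?_⟩
      rintro _ ⟨φ, rfl⟩
      have h1 : T φ = (T φ ^ (1/p)) ^ p := by
        rw [← Real.rpow_mul (hTnn φ), one_div, inv_mul_cancel₀ hp.ne', Real.rpow_one]
      rw [h1]
      exact Real.rpow_le_rpow (Real.rpow_nonneg (hTnn φ) _)
        (le_trans (hM ⟨φ, rfl⟩) (le_max_left _ _)) hp.le
    have h := hsum m x b
    rw [show (⨆ φ : K, (∑ j, R φ (x j) (b j) ^ p) ^ (1/p)) = 0 from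
      Real.iSup_of_not_bddAbove hnb, mul_zero] at h
    have hsum0 : ∑ j, S f (x j) (b j) ^ p = 0 := by
      have h0 : (0:ℝ) ≤ ∑ j, S f (x j) (b j) ^ p :=
        Finset.sum_nonneg fun j _ => Real.rpow_nonneg (hS0 _ _ _) _
      have := le_antisymm h (Real.rpow_nonneg h0 _)
      exact (Real.rpow_eq_zero h0 (by positivity)).mp this
    have hterm0 : ∀ j ∈ Finset.univ, S f (x j) (b j) ^ p = 0 :=
      (Finset.sum_eq_zero_iff_of_nonneg fun j _ =>
        Real.rpow_nonneg (hS0 _ _ _) _).mp hsum0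
    have : ∑ j, lam j * S f (x j) (b j) ^ p = 0 :=
      Finset.sum_eq_zero fun j hj => by rw [hterm0 j hj, mul_zero]
    rw [this, Real.zero_rpow (by positivity)]
    exact hRHSnn
end
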